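/- Let p be a real number and define X_1 = • and, for n ≥ 1, X_{n+1} = Σ_{k=1}^{n} binom(p,k) Σ_{n_1+⋯+n_k=n, n_i≥1} B_+(X_{n_1}X_{n_2}⋯X_{n_k}), where B_+ is extended multilinearly to ordered forests. Then this solution of the combinatorial Dyson–Schwinger equation X = 1 + B_+(X^p) in the Foissy Hopf algebra H_F is given explicitly by X_n = Σ_{T : |T| = n} C_p(T)·T, the sum over all planar rooted trees with n vertices. -/

import Mathlib

/-! ### Planar rooted trees -/

/-- A planar rooted tree: a root with an ordered list of branches.
`PTree.node [T₁,…,T_k]` is `B₊(T₁⋯T_k)`; `PTree.node []` is the one-vertex tree `•`. -/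
inductive PTree : Type where
  | node : List PTree → PTree

instance : Inhabited PTree := ⟨.node []⟩

noncomputable instance : DecidableEq PTree := Classical.decEq _

/-! ### Enumeration of planar trees by size -/

mutual
/-- All planar rooted trees with exactly `n` vertices. -/
def treesOfSize : ℕ → List PTree
  | 0 => []
  | n + 1 => (forestsOfSize n).map PTree.node
  termination_by n => 2 * n
  decreasing_by omega
/-- All ordered forests of planar rooted trees with `n` vertices in total. -/
def forestsOfSize : ℕ → List (List PTree)
  | 0 => [[]]
  | n + 1 =>
      ((List.range (n + 1)).attach.map (fun j =>
        (treesOfSize (j.1 + 1)).flatMap (fun t =>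
          (forestsOfSize (n - j.1)).map (t :: ·)))).flatten
  termination_by n => 2 * n + 1
  decreasing_by
  · have hj := List.mem_range.mp j.2; omega
  · have hj := List.mem_range.mp j.2; omega
end

/-! ### The Foissy Hopf algebra -/

/-- The Foissy Hopf algebra over `k`: the tensor algebra on the span of planar
rooted trees, with monomial basis the ordered forests (words) of planar trees. -/
abbrev HF (k : Type*) [CommSemiring k] := MonoidAlgebra k (FreeMonoid PTree)

/-- The model for `H_F ⊗ H_F`. -/
abbrev HF2 (k : Type*) [CommSemiring k] :=
  MonoidAlgebra k (FreeMonoid PTree × FreeMonoid PTree)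

/-- `B₊` on `H_F`: sends an ordered forest to the tree obtained by attaching a
new root, extended linearly. -/
noncomputable def BplusF (k : Type*) [CommSemiring k] : HF k → HF k :=
  fun x => MonoidAlgebra.ofCoeff
    (Finsupp.mapDomain (fun F => FreeMonoid.of (PTree.node (FreeMonoid.toList F))) x.coeff)

/-- The tensor product map `H_F × H_F → H_F ⊗ H_F` in the pair model. -/
noncomputable def tensHF (k : Type*) [CommSemiring k] (f g : HF k) : HF2 k :=
  f.coeff.sum (fun a x => g.coeff.sum (fun b y => MonoidAlgebra.single (a, b) (x * y)))

/-- The binomial coefficient `binom(p,k) = p(p−1)⋯(p−k+1)/k!` of a real number `p`. -/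
noncomputable def rbinom (p : ℝ) (n : ℕ) : ℝ :=
  (∏ i ∈ Finset.range n, (p - i)) / (n.factorial : ℝ)

/-- `C_p(T) = ∏_{v ∈ V̄(T)} binom(p, c(v))`, where `c(v)` is the number of children
of `v` (vertices with no children contribute the factor `binom(p,0) = 1`). -/
noncomputable def Cp (p : ℝ) : PTree → ℝ
  | .node l => rbinom p l.length * (l.attach.map (fun x => Cp p x.1)).prod
decreasing_by
  have h := List.sizeOf_lt_of_mem x.2
  simp only [PTree.node.sizeOf_spec]
  omega

/-- All compositions of `n` into exactly `k` positive parts. -/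
def compositionsList : ℕ → ℕ → List (List ℕ)
  | n, 0 => if n = 0 then [[]] else []
  | n, k + 1 =>
      ((List.range n).map (fun i =>
        (compositionsList (n - (i + 1)) k).map ((i + 1) :: ·))).flatten

/-- The homogeneous components `X_n = Σ_{|T| = n} C_p(T)·T` of the solution of the
combinatorial Dyson–Schwinger equation `X = 1 + B₊(X^p)` in `H_F`. -/
noncomputable def XF (p : ℝ) (n : ℕ) : HF ℝ :=
  ((treesOfSize n).map (fun T => MonoidAlgebra.single (FreeMonoid.of T) (Cp p T))).sum

/-!
An ordered forest is determined by the sizes of its trees, a composition `(n₁,…,n_k)` of its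
size, together with a tree of size `nᵢ` in each slot. Expanding `X_{n₁}⋯X_{n_k}` therefore
lists every forest `F = T₁⋯T_k` exactly once with coefficient `∏ C_p(Tᵢ)`, and grafting `F`
on a new root multiplies that coefficient by `binom(p,k)`, which gives `C_p(B₊(F))`. So
`Σ_{|T| = n} C_p(T)·T` satisfies the recursion defining `X`, which determines `X_n` by strong
induction.
-/

namespace List

variable {α β M : Type*} [AddCommMonoid M]

lemma sum_map_range (n : ℕ) (f : ℕ → M) :
    ((List.range n).map f).sum = ∑ k ∈ Finset.range n, f k :=
  rfl

lemma sum_map_flatMap (l : List α) (h : α → List β) (g : β → M) :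
    ((l.flatMap h).map g).sum = (l.map fun a => ((h a).map g).sum).sum := by
  simp [List.flatMap, List.sum_flatten, List.map_flatten, Function.comp_def]

lemma sum_map_sum_map_comm (l : List α) (l' : List β) (f : α → β → M) :
    (l.map fun a => (l'.map (f a)).sum).sum = (l'.map fun b => (l.map fun a => f a b).sum).sum := by
  simpa using Multiset.sum_map_sum_map (l : Multiset α) (l' : Multiset β) (f := f)

lemma sum_map_finset_sum_comm (l : List α) (s : Finset β) (f : α → β → M) :
    (l.map fun a => ∑ k ∈ s, f a k).sum = ∑ k ∈ s, (l.map fun a => f a k).sum := by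
  simpa using Multiset.sum_map_sum (m := (l : Multiset α)) (s := s) (f := f)

lemma sum_map_mul_sum_map {R : Type*} [NonUnitalNonAssocSemiring R] (l : List α) (l' : List β)
    (f : α → R) (g : β → R) :
    (l.map f).sum * (l'.map g).sum = (l.map fun a => (l'.map fun b => f a * g b).sum).sum := by
  rw [← List.sum_map_mul_right]
  simp only [List.sum_map_mul_left]

end List

lemma Cp_node (p : ℝ) (l : List PTree) :
    Cp p (PTree.node l) = rbinom p l.length * (l.map (Cp p)).prod := by
  rw [Cp, List.attach_map_val]

/-- The forests whose `i`-th tree has `comp[i]` vertices. -/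
def forestsOfComp : List ℕ → List (List PTree)
  | [] => [[]]
  | m :: comp => (treesOfSize m).flatMap fun t => (forestsOfComp comp).map (t :: ·)

lemma length_of_mem_forestsOfComp {comp : List ℕ} {F : List PTree}
    (h : F ∈ forestsOfComp comp) : F.length = comp.length := by
  induction comp generalizing F with
  | nil => simp_all [forestsOfComp]
  | cons m comp ih =>
    simp only [forestsOfComp, List.mem_flatMap, List.mem_map] at h
    obtain ⟨t, -, F, hF, rfl⟩ := h
    simp [ih hF]

lemma of_mem_compositionsList {n k : ℕ} {comp : List ℕ} (h : comp ∈ compositionsList n k) :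
    comp.length = k ∧ comp.sum = n ∧ ∀ m ∈ comp, 1 ≤ m := by
  induction k generalizing n comp with
  | zero =>
    rw [compositionsList] at h
    split_ifs at h with hn <;> simp_all
  | succ k ih =>
    simp only [compositionsList, List.mem_flatten, List.mem_map, List.mem_range] at h
    obtain ⟨-, ⟨i, hi, rfl⟩, h⟩ := h
    obtain ⟨rest, hrest, rfl⟩ := List.mem_map.mp h
    obtain ⟨hlen, hsum, hpos⟩ := ih hrest
    refine ⟨by simp [hlen], by simp [hsum]; omega, ?_⟩
    simpa using hpos

lemma compositionsList_zero_right {n : ℕ} (hn : n ≠ 0) : compositionsList n 0 = [] := by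
  simp [compositionsList, hn]

section Regrouping

variable {M : Type*} [AddCommMonoid M]

lemma sum_forestsOfComp_cons (m : ℕ) (comp : List ℕ) (g : List PTree → M) :
    ((forestsOfComp (m :: comp)).map g).sum =
      ((treesOfSize m).map fun t => ((forestsOfComp comp).map fun F => g (t :: F)).sum).sum := by
  simp only [forestsOfComp, List.sum_map_flatMap, List.map_map, Function.comp_def]

lemma sum_compositionsList_succ (n k : ℕ) (f : List ℕ → M) :
    ((compositionsList n (k + 1)).map f).sum =
      ∑ i ∈ Finset.range n,
        ((compositionsList (n - (i + 1)) k).map fun comp => f ((i + 1) :: comp)).sum := by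
  rw [compositionsList, List.map_flatten, List.sum_flatten]
  simp only [List.map_map, Function.comp_def, List.sum_map_range]

lemma sum_forestsOfSize_succ (n : ℕ) (g : List PTree → M) :
    ((forestsOfSize (n + 1)).map g).sum =
      ∑ j ∈ Finset.range (n + 1), ((treesOfSize (j + 1)).map fun t =>
        ((forestsOfSize (n - j)).map fun F => g (t :: F)).sum).sum := by
  rw [forestsOfSize, List.map_flatten, List.sum_flatten]
  simp only [List.map_subtype, List.unattach_attach, List.map_map, Function.comp_def,
    List.sum_map_flatMap, List.sum_map_range]

/-- Compositions of `n` have at most `n` parts, so any bound `N ≥ n` on their number will do;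
leaving it free lets the induction hypothesis be used at `n - j` with the same bound. -/
theorem sum_forestsOfSize_eq_sum_compositionsList (g : List PTree → M) {n N : ℕ} (hn : n ≤ N) :
    ((forestsOfSize n).map g).sum =
      ∑ k ∈ Finset.range (N + 1),
        ((compositionsList n k).map fun comp => ((forestsOfComp comp).map g).sum).sum := by
  induction n using Nat.strong_induction_on generalizing N g with
  | _ n ih =>
    rcases n with _ | n
    · simp [Finset.sum_range_succ', forestsOfSize, compositionsList, forestsOfComp]
    obtain ⟨N, rfl⟩ : ∃ N', N = N' + 1 := ⟨N - 1, by omega⟩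
    conv_rhs => rw [Finset.sum_range_succ', compositionsList_zero_right n.succ_ne_zero,
      List.map_nil, List.sum_nil, add_zero]
    simp only [sum_compositionsList_succ, Nat.succ_sub_succ]
    rw [Finset.sum_comm, sum_forestsOfSize_succ]
    refine Finset.sum_congr rfl fun j hj => ?_
    have hjN : n - j ≤ N := by have := Finset.mem_range.mp hj; omega
    simp only [ih (n - j) (by omega) _ hjN, List.sum_map_finset_sum_comm, sum_forestsOfComp_cons]
    exact Finset.sum_congr rfl fun k _ => List.sum_map_sum_map_comm _ _ _

end Regrouping

lemma BplusF_eq_mapDomainLinearMap (k : Type*) [CommSemiring k] :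
    BplusF k = MonoidAlgebra.mapDomainLinearMap k k fun F => FreeMonoid.of (PTree.node F.toList) :=
  rfl

lemma XF_one (p : ℝ) : XF p 1 = MonoidAlgebra.single (FreeMonoid.of (PTree.node [])) 1 := by
  simp [XF, treesOfSize, forestsOfSize, Cp_node, rbinom]

lemma XF_succ (p : ℝ) (n : ℕ) :
    XF p (n + 1) = ((forestsOfSize n).map fun F => MonoidAlgebra.single
      (FreeMonoid.of (PTree.node F)) (rbinom p F.length * (F.map (Cp p)).prod)).sum := by
  simp only [XF, treesOfSize, List.map_map, Function.comp_def, Cp_node]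

lemma prod_map_XF (p : ℝ) (comp : List ℕ) :
    (comp.map (XF p)).prod = ((forestsOfComp comp).map fun F =>
      MonoidAlgebra.single (FreeMonoid.ofList F) (F.map (Cp p)).prod).sum := by
  induction comp with
  | nil => simp [forestsOfComp, MonoidAlgebra.one_def]
  | cons m comp ih =>
    simp only [List.map_cons, List.prod_cons, ih, XF, List.sum_map_mul_sum_map,
      sum_forestsOfComp_cons, MonoidAlgebra.single_mul_single, FreeMonoid.ofList_cons]

theorem XF_succ_eq_sum_compositionsList (p : ℝ) {n : ℕ} (hn : 1 ≤ n) :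
    XF p (n + 1) = ∑ k ∈ Finset.Icc 1 n, rbinom p k •
      BplusF ℝ (((compositionsList n k).map fun comp => (comp.map (XF p)).prod).sum) := by
  rw [XF_succ, sum_forestsOfSize_eq_sum_compositionsList _ le_rfl, Finset.range_eq_Ico,
    Finset.sum_eq_sum_Ico_succ_bot (by omega), compositionsList_zero_right (by omega),
    List.map_nil, List.sum_nil, zero_add, Finset.Ico_add_one_right_eq_Icc]
  refine Finset.sum_congr rfl fun k _ => ?_
  simp only [prod_map_XF, BplusF_eq_mapDomainLinearMap, map_list_sum, List.map_map,
    Function.comp_def, List.smul_sum]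
  refine congrArg List.sum (List.map_congr_left fun comp hcomp => ?_)
  refine congrArg List.sum (List.map_congr_left fun F hF => ?_)
  rw [length_of_mem_forestsOfComp hF, (of_mem_compositionsList hcomp).1]
  simp

/-- The solution of the combinatorial Dyson–Schwinger equation
`X = 1 + B₊(X^p)` in the Foissy Hopf algebra, given by `X₁ = •` and
`X_{n+1} = Σ_{k=1}^n binom(p,k) Σ_{n₁+⋯+n_k=n} B₊(X_{n₁}⋯X_{n_k})`, is
`X_n = Σ_{|T|=n} C_p(T)·T`. -/
theorem dyson_schwinger_solution_HF (p : ℝ) (X : ℕ → HF ℝ)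
    (h1 : X 1 = MonoidAlgebra.single (FreeMonoid.of (PTree.node [])) 1)
    (hrec : ∀ n, 1 ≤ n →
      X (n + 1) = ∑ k ∈ Finset.Icc 1 n, rbinom p k •
        BplusF ℝ (((compositionsList n k).map (fun comp => (comp.map X).prod)).sum)) :
    ∀ n, 1 ≤ n → X n = XF p n := by
  intro n hn
  induction n using Nat.strong_induction_on with
  | _ n ih =>
    obtain ⟨m, rfl⟩ := Nat.exists_eq_add_of_le' hn
    rcases m.eq_zero_or_pos with rfl | hm
    · rw [h1, XF_one]
    rw [hrec m hm, XF_succ_eq_sum_compositionsList p hm]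
    refine Finset.sum_congr rfl fun k _ => ?_
    congr 3
    refine List.map_congr_left fun comp hcomp =>
      congrArg List.prod (List.map_congr_left fun q hq => ?_)
    obtain ⟨-, hsum, hpos⟩ := of_mem_compositionsList hcomp
    exact ih q (by have := List.le_sum_of_mem hq; omega) (hpos q hq)
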